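/- The statistical distance of the outcome distributions of any measurement is bounded by half the trace distance: let M₁, …, M_m be Hermitian positive semidefinite complex d × d matrices with Σₖ Mₖ = I (a POVM), and let ρ and σ be density matrices. Then (1/2)·Σₖ |tr(Mₖ·ρ) − tr(Mₖ·σ)| ≤ (1/2)·‖ρ − σ‖₁, where each tr(Mₖ·ρ) and tr(Mₖ·σ) is a real number. -/

import Mathlib

open Matrix
open scoped ComplexOrder

/-- The old Mathlib `Matrix.PosSemidef.sqrt` (removed since), with its old definition. -/
noncomputable def posSemidefSqrtOld {d : Type*} [Fintype d] [DecidableEq d] {A : Matrix d d ℂ}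
    (hA : A.PosSemidef) : Matrix d d ℂ :=
  hA.1.eigenvectorUnitary.1 * diagonal ((↑) ∘ (√·) ∘ hA.1.eigenvalues) *
  (star hA.1.eigenvectorUnitary : Matrix d d ℂ)

/-- The trace norm of a complex square matrix: the trace of the positive
semidefinite square root of `Aᴴ * A`. -/
noncomputable def traceNorm {d : Type*} [Fintype d] [DecidableEq d] (A : Matrix d d ℂ) : ℝ :=
  ((posSemidefSqrtOld (Matrix.posSemidef_conjTranspose_mul_self A)).trace).re

/-- A density matrix: positive semidefinite (hence Hermitian) with trace 1. -/
def IsDensity {d : Type*} [Fintype d] (ρ : Matrix d d ℂ) : Prop :=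
  ρ.PosSemidef ∧ ρ.trace = 1

/-! Write `Δ = ρ - σ` as `Δ⁺ - Δ⁻` with `|Δ| = Δ⁺ + Δ⁻`, both parts positive semidefinite. Since
`tr(M P) ≥ 0` for positive semidefinite `M` and `P`, each outcome satisfies
`|tr(M Δ)| ≤ tr(M Δ⁺) + tr(M Δ⁻) = tr(M |Δ|)`, and summing over a POVM leaves `tr |Δ| = ‖Δ‖₁`. -/

section

open scoped MatrixOrder

variable {d : Type*} [Fintype d] [DecidableEq d]

lemma posSemidefSqrtOld_eq_sqrt {A : Matrix d d ℂ} (hA : A.PosSemidef) :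
    posSemidefSqrtOld hA = CFC.sqrt A := by
  rw [CFC.sqrt_eq_real_sqrt A hA.nonneg, cfcₙ_eq_cfc, hA.1.cfc_eq, IsHermitian.cfc,
    Unitary.conjStarAlgAut_apply]
  rfl

lemma traceNorm_eq_re_trace_abs (A : Matrix d d ℂ) : traceNorm A = (CFC.abs A).trace.re := by
  rw [traceNorm, posSemidefSqrtOld_eq_sqrt]
  rfl

namespace Matrix

lemma PosSemidef.re_trace_mul_nonneg {M P : Matrix d d ℂ} (hM : M.PosSemidef)
    (hP : P.PosSemidef) : 0 ≤ (M * P).trace.re := by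
  set S := CFC.sqrt P
  have hS : Sᴴ = S := (CFC.sqrt_nonneg P).isSelfAdjoint
  have htrace : (M * P).trace = (Sᴴ * M * S).trace := by
    rw [hS, ← CFC.sqrt_mul_sqrt_self P hP.nonneg, ← Matrix.mul_assoc, trace_mul_cycle]
  rw [htrace]
  exact (Complex.nonneg_iff.mp (hM.conjTranspose_mul_mul_same S).trace_nonneg).1

lemma PosSemidef.abs_re_trace_mul_le {M A : Matrix d d ℂ} (hM : M.PosSemidef)
    (hA : A.IsHermitian) : |(M * A).trace.re| ≤ (M * CFC.abs A).trace.re := by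
  have hpos := hM.re_trace_mul_nonneg (CFC.posPart_nonneg A).posSemidef
  have hneg := hM.re_trace_mul_nonneg (CFC.negPart_nonneg A).posSemidef
  rw [← CFC.posPart_add_negPart A hA.isSelfAdjoint]
  nth_rw 1 [← CFC.posPart_sub_negPart A hA.isSelfAdjoint]
  simp only [Matrix.mul_sub, Matrix.mul_add, trace_sub, trace_add, Complex.sub_re, Complex.add_re]
  exact abs_le.mpr ⟨by linarith, by linarith⟩

end Matrix

lemma sum_abs_re_trace_mul_le_traceNorm {ι : Type*} {s : Finset ι} {M : ι → Matrix d d ℂ}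
    (hM : ∀ k ∈ s, (M k).PosSemidef) (hsum : ∑ k ∈ s, M k = 1) {A : Matrix d d ℂ}
    (hA : A.IsHermitian) : ∑ k ∈ s, |(M k * A).trace.re| ≤ traceNorm A :=
  calc ∑ k ∈ s, |(M k * A).trace.re|
      ≤ ∑ k ∈ s, (M k * CFC.abs A).trace.re :=
        Finset.sum_le_sum fun k hk => (hM k hk).abs_re_trace_mul_le hA
    _ = traceNorm A := by
        rw [← Complex.re_sum, ← trace_sum, ← Finset.sum_mul, hsum, Matrix.one_mul,
          traceNorm_eq_re_trace_abs]

end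

/-- The statistical distance of the outcome distributions of a POVM measurement
is bounded by half the trace distance. -/
theorem povm_statistical_distance_le {d : Type*} [Fintype d] [DecidableEq d] {m : ℕ}
    (M : Fin m → Matrix d d ℂ) (hM : ∀ k, (M k).PosSemidef)
    (hsum : ∑ k, M k = 1)
    (ρ σ : Matrix d d ℂ) (hρ : IsDensity ρ) (hσ : IsDensity σ) :
    (1 / 2) * ∑ k, |((M k * ρ).trace).re - ((M k * σ).trace).re| ≤
      (1 / 2) * traceNorm (ρ - σ) := by
  have hdiff (k : Fin m) :
      ((M k * ρ).trace).re - ((M k * σ).trace).re = (M k * (ρ - σ)).trace.re := by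
    rw [Matrix.mul_sub, trace_sub, Complex.sub_re]
  simp only [hdiff]
  gcongr
  exact sum_abs_re_trace_mul_le_traceNorm (fun k _ => hM k) hsum (hρ.1.1.sub hσ.1.1)
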